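/- arXiv:1908.08448 — 2 statements merged into one kernel-verified Lean document; each statement's English description precedes it below -/
import Mathlib

section
/- For n ≥ 3, the number of affine equivalence classes into which the set of quadratic MRS functions {(0,t)_n : 1 ≤ t ≤ ⌊n/2⌋} is partitioned by affine equivalence equals τ(n) − 1, where τ(n) is the number of positive divisors of n. -/
/-- The monomial rotation symmetric quadratic function `(0,t)_n` for `t < n/2`:
`x ↦ ∑_{j=0}^{n-1} x_j * x_{(j+t) mod n}` over `ZMod 2`. -/
def mrs (n t : ℕ) (x : Fin n → ZMod 2) : ZMod 2 :=
  ∑ j : Fin n, x j * x ⟨(j.val + t) % n, Nat.mod_lt _ j.pos⟩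

/-- The short MRS function `(0,k)_{2k}`: `x ↦ ∑_{j=0}^{k-1} x_j * x_{j+k}`. -/
def shortMrs (n t : ℕ) (x : Fin n → ZMod 2) : ZMod 2 :=
  ∑ j ∈ Finset.univ.filter (fun j : Fin n => j.val < t),
    x j * x ⟨(j.val + t) % n, Nat.mod_lt _ j.pos⟩

/-- The quadratic MRS function `(0,t)_n`, including the short case `n = 2t`. -/
def rsFun (n t : ℕ) : (Fin n → ZMod 2) → ZMod 2 :=
  if 2 * t = n then shortMrs n t else mrs n t

/-- Affine equivalence of Boolean functions. -/
def AffEquiv (n : ℕ) (f g : (Fin n → ZMod 2) → ZMod 2) : Prop :=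
  ∃ (A : Matrix (Fin n) (Fin n) (ZMod 2)) (b : Fin n → ZMod 2),
    IsUnit A ∧ ∀ x, f x = g (A.mulVec x + b)

/-!
Read on coordinates indexed by `ZMod n`, `(0,t)_n` is the quadratic form `∑ⱼ xⱼ x_{j+t}`.
Multiplying the indices by a unit `u` of `ZMod n` permutes the coordinates and turns
`(0,s)_n` into `(0,us)_n`; as every `t` is a unit multiple of `gcd(n,t)`, a non-short `(0,t)_n`
is equivalent to `(0,gcd(n,t))_n`.

Two affine invariants separate these representatives. The linear structures of a quadratic
form make up the radical of its polar form: for `(0,t)_n` these are the `2t`-periodic vectors,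
`2^[ZMod n : ⟨2t⟩]` of them, while the short function has only `0`. The sign sum
`∑ₓ (-1)^{f x}` has square `2ⁿ ∑_{c ∈ rad} (-1)^{f c}`, so it vanishes iff `f` is nonzero
somewhere on the radical. For `(0,t)_n` this happens iff `t` has odd order in `ZMod n`: for odd
order the indicator of `⟨t⟩` is such a point, for even order the terms of `f c` cancel in pairs
under `j ↦ j + (ord t / 2) • t`. The two invariants recover the order of `t`, hence `gcd(n,t)`,
so the classes correspond to the proper divisors of `n`.
-/

open Finset Function

def signOf (a : ZMod 2) : ℤ := if a = 0 then 1 else -1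

lemma signOf_add : ∀ a b : ZMod 2, signOf (a + b) = signOf a * signOf b := by decide

lemma signOf_add_one : ∀ a : ZMod 2, signOf (a + 1) = -signOf a := by decide

section SignSum

variable {V W : Type*}

def signSum [Fintype V] (f : V → ZMod 2) : ℤ := ∑ x, signOf (f x)

lemma signSum_eq_of_forall_eq_comp [Fintype V] [Fintype W] {f : V → ZMod 2} {g : W → ZMod 2}
    (σ : V ≃ W) (h : ∀ x, f x = g (σ x)) : signSum f = signSum g :=
  Fintype.sum_equiv σ _ _ fun x => by rw [h]

variable [AddCommGroup V]

lemma signSum_eq_zero_of_forall_add_eq_add_one [Fintype V] {f : V → ZMod 2} {c : V}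
    (h : ∀ x, f (x + c) = f x + 1) : signSum f = 0 := by
  have : signSum f = -signSum f := calc
    signSum f = ∑ x, signOf (f (x + c)) :=
      (Fintype.sum_equiv (Equiv.addRight c) _ _ fun _ => rfl).symm
    _ = -signSum f := by simp [h, signOf_add_one, signSum]
  linarith

def linearStructures (f : V → ZMod 2) : Set V := {c | ∃ ε, ∀ x, f (x + c) = f x + ε}

lemma card_linearStructures_eq_of_forall_eq_comp [AddCommGroup W] {f : V → ZMod 2}
    {g : W → ZMod 2} (e : V ≃+ W) (b : W) (h : ∀ x, f x = g (e x + b)) :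
    Nat.card (linearStructures f) = Nat.card (linearStructures g) := by
  refine Nat.card_congr (e.toEquiv.subtypeEquiv fun c => exists_congr fun ε => ?_)
  simp only [h, map_add, AddEquiv.toEquiv_eq_coe, EquivLike.coe_coe]
  constructor
  · intro H y
    simpa [add_right_comm] using H (e.symm (y - b))
  · intro H x
    rw [add_right_comm]
    exact H _

end SignSum

section Quadratic

variable {ι : Type*} [Fintype ι] [DecidableEq ι] {f : (ι → ZMod 2) → ZMod 2}
  {D : (ι → ZMod 2) → ι → ZMod 2}

lemma sum_signOf_dotProduct (v : ι → ZMod 2) :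
    ∑ x : ι → ZMod 2, signOf (x ⬝ᵥ v) =
      if v = 0 then (Fintype.card (ι → ZMod 2) : ℤ) else 0 := by
  split_ifs with hv
  · simp [hv, signOf]
  · obtain ⟨j, hj⟩ := Function.ne_iff.mp hv
    refine signSum_eq_zero_of_forall_add_eq_add_one (c := Pi.single j 1) fun x => ?_
    have hj1 : v j = 1 := by
      rw [Pi.zero_apply] at hj
      generalize v j = a at hj
      revert a; decide
    rw [add_dotProduct, single_dotProduct, one_mul, hj1]

variable (hf : ∀ x c, f (x + c) = f x + x ⬝ᵥ D c + f c)
include hf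

lemma mem_linearStructures_iff {c : ι → ZMod 2} : c ∈ linearStructures f ↔ D c = 0 := by
  refine ⟨fun ⟨ε, hε⟩ => ?_, fun h => ⟨f c, fun x => by rw [hf, h, dotProduct_zero, add_zero]⟩⟩
  have hf0 : f 0 = 0 := by
    simpa [CharTwo.add_self_eq_zero] using hf 0 0
  have hε0 : ε = f c := by simpa [hf0] using (hε 0).symm
  funext j
  have := hf (Pi.single j 1) c
  rw [hε, hε0, single_dotProduct, one_mul] at this
  simpa using this

lemma signSum_mul_self :
    signSum f * signSum f =
      Fintype.card (ι → ZMod 2) * ∑ c with D c = 0, signOf (f c) := by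
  have hpair : ∀ x c, signOf (f x) * signOf (f (x + c)) = signOf (x ⬝ᵥ D c) * signOf (f c) := by
    intro x c
    rw [← signOf_add, ← signOf_add, hf, ← add_assoc, ← add_assoc, CharTwo.add_self_eq_zero,
      zero_add]
  calc signSum f * signSum f
      = ∑ x, ∑ c, signOf (f x) * signOf (f (x + c)) := by
        rw [signSum, sum_mul_sum]
        exact sum_congr rfl fun x _ =>
          (Fintype.sum_equiv (Equiv.addLeft x) _ _ fun _ => rfl).symm
    _ = ∑ c, (∑ x, signOf (x ⬝ᵥ D c)) * signOf (f c) := by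
        simp only [hpair, sum_mul]
        exact sum_comm
    _ = _ := by
        simp only [sum_signOf_dotProduct, ite_mul, zero_mul, sum_ite, sum_const_zero, add_zero,
          mul_sum]

lemma signSum_ne_zero (h : ∀ c, D c = 0 → f c = 0) : signSum f ≠ 0 := by
  intro h0
  have hsq := signSum_mul_self hf
  have hD0 : D 0 = 0 := (mem_linearStructures_iff hf).mp ⟨0, fun x => by simp⟩
  rw [h0, sum_congr rfl fun c hc => by rw [h c (mem_filter.mp hc).2]] at hsq
  exact (by simpa [signOf] using hsq : ∀ c, D c ≠ 0) 0 hD0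

end Quadratic

section CyclicForm

variable {G : Type*} [AddCommGroup G]

lemma shift_add_shift_neg_eq_zero_iff (a : G) (c : G → ZMod 2) :
    (fun j => c (j + a) + c (j - a)) = 0 ↔ Periodic c (a + a) := by
  have hZ2 : ∀ u v : ZMod 2, u + v = 0 ↔ u = v := by decide
  simp only [funext_iff, Pi.zero_apply, hZ2, Periodic]
  refine (Equiv.subRight a).forall_congr fun {j} => ?_
  simp [← add_assoc]

def periodicEquiv (a : G) :
    {c : G → ZMod 2 // Periodic c a} ≃ (G ⧸ AddSubgroup.zmultiples a → ZMod 2) where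
  toFun c q := Quotient.liftOn' q c.1 fun x y hxy => by
    obtain ⟨k, hk⟩ := AddSubgroup.mem_zmultiples_iff.mp (QuotientAddGroup.leftRel_apply.mp hxy)
    rw [show y = x + k • a by rw [hk]; abel, c.2.zsmul k x]
  invFun c := ⟨fun j => c j, fun j => by
    change c (↑(j + a)) = c ↑j
    rw [QuotientAddGroup.eq.mpr (by simp : -(j + a) + j ∈ AddSubgroup.zmultiples a)]⟩
  left_inv c := rfl
  right_inv c := funext fun q => QuotientAddGroup.induction_on q fun _ => rfl

lemma card_periodic [Finite G] (a : G) :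
    Nat.card {c : G → ZMod 2 // Periodic c a} = 2 ^ (AddSubgroup.zmultiples a).index := by
  rw [Nat.card_congr (periodicEquiv a), Nat.card_fun, Nat.card_zmod, AddSubgroup.index]

variable [Fintype G]

lemma sum_eq_zero_of_periodic {b : G → ZMod 2} {a : G} (hb : Periodic b a)
    (ha : Even (addOrderOf a)) : ∑ j, b j = 0 := by
  obtain ⟨k, hk⟩ := ha
  have hk0 : k ≠ 0 := by have := addOrderOf_pos a; omega
  have hh : k • a + k • a = 0 := by rw [← add_nsmul, ← hk, addOrderOf_nsmul_eq_zero]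
  have hne : k • a ≠ 0 := nsmul_ne_zero_of_lt_addOrderOf hk0 (by omega)
  refine sum_involution (fun j _ => j + k • a) (fun j _ => ?_) (fun j _ _ => by simpa)
    (fun _ _ => mem_univ _) (fun j _ => by rw [add_assoc, hh, add_zero])
  rw [hb.nsmul k j, CharTwo.add_self_eq_zero]

def cyclicForm (a : G) (x : G → ZMod 2) : ZMod 2 := ∑ j, x j * x (j + a)

lemma cyclicForm_add (a : G) (x c : G → ZMod 2) :
    cyclicForm a (x + c) =
      cyclicForm a x + x ⬝ᵥ (fun j => c (j + a) + c (j - a)) + cyclicForm a c := by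
  have hshift : ∑ j, c j * x (j + a) = ∑ j, x j * c (j - a) :=
    Fintype.sum_equiv (Equiv.addRight a) _ _ fun j => by simp [mul_comm]
  simp only [cyclicForm, dotProduct, Pi.add_apply, mul_add, add_mul, sum_add_distrib, hshift]
  ring

lemma cyclicForm_eq_zero_of_periodic {a : G} {c : G → ZMod 2} (hc : Periodic c (a + a))
    (ha : Even (addOrderOf a)) : cyclicForm a c = 0 :=
  sum_eq_zero_of_periodic (fun j => by rw [add_assoc, hc j, mul_comm]) ha

variable [DecidableEq G]

lemma card_linearStructures_cyclicForm (a : G) :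
    Nat.card (linearStructures (cyclicForm a)) =
      2 ^ (AddSubgroup.zmultiples (a + a)).index := by
  rw [← card_periodic]
  exact Nat.card_congr (Equiv.subtypeEquivRight fun c =>
    (mem_linearStructures_iff (cyclicForm_add a)).trans (shift_add_shift_neg_eq_zero_iff a c))

lemma signSum_cyclicForm_eq_zero_of_odd {a : G} (ha : Odd (addOrderOf a)) :
    signSum (cyclicForm a) = 0 := by
  set H := AddSubgroup.zmultiples a
  let c : G → ZMod 2 := fun j => if j ∈ H then 1 else 0
  have hc : Periodic c a := fun j => by
    simp only [c, AddSubgroup.add_mem_cancel_right H (AddSubgroup.mem_zmultiples a)]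
  have hcc : cyclicForm a c = 1 := by
    have hsq : ∀ j, c j * c (j + a) = c j := fun j => by
      rw [hc j]
      simp only [c]
      split_ifs <;> simp
    rw [cyclicForm, sum_congr rfl fun j _ => hsq j, sum_boole, ← Fintype.card_subtype,
      ← Nat.card_eq_fintype_card]
    exact ZMod.natCast_eq_one_iff_odd.mpr ((Nat.card_zmultiples a).symm ▸ ha)
  refine signSum_eq_zero_of_forall_add_eq_add_one (c := c) fun x => ?_
  rw [cyclicForm_add, (shift_add_shift_neg_eq_zero_iff a c).mpr (hc.add_period hc),
    dotProduct_zero, add_zero, hcc]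

lemma signSum_cyclicForm_eq_zero_iff (a : G) :
    signSum (cyclicForm a) = 0 ↔ Odd (addOrderOf a) := by
  refine ⟨fun h => ?_, signSum_cyclicForm_eq_zero_of_odd⟩
  by_contra hodd
  exact signSum_ne_zero (cyclicForm_add a) (fun c hc => cyclicForm_eq_zero_of_periodic
    ((shift_add_shift_neg_eq_zero_iff a c).mp hc) (Nat.not_odd_iff_even.mp hodd)) h

end CyclicForm

section HalfForm

variable {G : Type*} [AddCommGroup G] [Fintype G] [DecidableEq G] {S : Finset G} {a : G}

def halfForm (S : Finset G) (a : G) (x : G → ZMod 2) : ZMod 2 := ∑ j ∈ S, x j * x (j + a)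

variable (hS : ∀ j, j + a ∈ S ↔ j ∉ S) (ha : a + a = 0)
include hS ha

lemma halfForm_add (x c : G → ZMod 2) :
    halfForm S a (x + c) = halfForm S a x + x ⬝ᵥ (fun j => c (j + a)) + halfForm S a c := by
  have hinv : ∀ j, j + a + a = j := fun j => by rw [add_assoc, ha, add_zero]
  have hflip : ∑ j ∈ S, c j * x (j + a) = ∑ j ∈ Sᶜ, x j * c (j + a) :=
    sum_nbij' (· + a) (· + a) (fun j hj => by simpa [hS] using hj)
      (fun j hj => by simpa [← hS, hinv] using hj) (fun j _ => hinv j) (fun j _ => hinv j)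
      (fun j _ => by rw [hinv, mul_comm])
  have hsplit : x ⬝ᵥ (fun j => c (j + a)) =
      ∑ j ∈ S, x j * c (j + a) + ∑ j ∈ Sᶜ, x j * c (j + a) :=
    (sum_add_sum_compl S _).symm
  simp only [halfForm, Pi.add_apply, mul_add, add_mul, sum_add_distrib, hflip, hsplit]
  ring

lemma card_linearStructures_halfForm : Nat.card (linearStructures (halfForm S a)) = 1 := by
  have : linearStructures (halfForm S a) = {0} := by
    ext c
    rw [mem_linearStructures_iff (halfForm_add hS ha), Set.mem_singleton_iff, funext_iff,
      funext_iff]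
    exact ⟨fun h j => by simpa using h (j - a), fun h j => h _⟩
  rw [this, Nat.card_unique]

end HalfForm

lemma cyclicForm_units_mul {R : Type*} [CommRing R] [Fintype R] (u : Rˣ) (s : R)
    (y : R → ZMod 2) : cyclicForm (↑u * s) y = cyclicForm s fun i => y (u * i) :=
  (Fintype.sum_equiv (Units.mulLeft u) _ _ fun i => by simp [mul_add]).symm

section Relabel

variable {n : ℕ} [NeZero n]

def relabelZMod (n : ℕ) [NeZero n] : (Fin n → ZMod 2) ≃+ (ZMod n → ZMod 2) :=
  (LinearEquiv.funCongrLeft (ZMod 2) (ZMod 2) (ZMod.finEquiv n).symm.toEquiv).toAddEquiv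

lemma val_finEquiv (j : Fin n) : (ZMod.finEquiv n j).val = j := by
  cases n with
  | zero => exact absurd rfl (NeZero.ne 0)
  | succ => rfl

lemma relabelZMod_apply_finEquiv (x : Fin n → ZMod 2) (j : Fin n) :
    relabelZMod n x (ZMod.finEquiv n j) = x j :=
  congrArg x ((ZMod.finEquiv n).symm_apply_apply j)

lemma relabelZMod_apply_add_natCast (x : Fin n → ZMod 2) (j : Fin n) (t : ℕ) :
    relabelZMod n x (ZMod.finEquiv n j + t) = x ⟨(j.val + t) % n, Nat.mod_lt _ j.pos⟩ := by
  change x ((ZMod.finEquiv n).symm _) = _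
  congr 1
  apply Fin.ext
  rw [← val_finEquiv, RingEquiv.apply_symm_apply, ZMod.val_add, val_finEquiv, ZMod.val_natCast,
    Nat.add_mod_mod]

lemma mrs_eq_cyclicForm (t : ℕ) (x : Fin n → ZMod 2) :
    mrs n t x = cyclicForm (t : ZMod n) (relabelZMod n x) := by
  refine Fintype.sum_equiv (ZMod.finEquiv n).toEquiv _ _ fun j => ?_
  rw [RingEquiv.toEquiv_eq_coe, EquivLike.coe_coe, relabelZMod_apply_add_natCast,
    relabelZMod_apply_finEquiv]

lemma shortMrs_eq_halfForm (t : ℕ) (x : Fin n → ZMod 2) :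
    shortMrs n t x = halfForm {j : ZMod n | j.val < t} (t : ZMod n) (relabelZMod n x) := by
  rw [shortMrs, halfForm, sum_filter, sum_filter]
  refine Fintype.sum_equiv (ZMod.finEquiv n).toEquiv _ _ fun j => ?_
  rw [RingEquiv.toEquiv_eq_coe, EquivLike.coe_coe, relabelZMod_apply_add_natCast,
    relabelZMod_apply_finEquiv, val_finEquiv]

end Relabel

section Invariants

variable {n : ℕ} [NeZero n] {t : ℕ}

lemma signSum_rsFun_of_ne (h : 2 * t ≠ n) :
    signSum (rsFun n t) = signSum (cyclicForm (t : ZMod n)) :=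
  signSum_eq_of_forall_eq_comp (relabelZMod n).toEquiv fun x => by
    rw [rsFun, if_neg h, mrs_eq_cyclicForm]; rfl

lemma card_linearStructures_rsFun_of_ne (h : 2 * t ≠ n) :
    Nat.card (linearStructures (rsFun n t)) =
      2 ^ (AddSubgroup.zmultiples ((t : ZMod n) + t)).index := by
  rw [← card_linearStructures_cyclicForm]
  exact card_linearStructures_eq_of_forall_eq_comp (relabelZMod n) 0 fun x => by
    rw [add_zero, rsFun, if_neg h, mrs_eq_cyclicForm]

lemma card_linearStructures_rsFun_of_eq (h : 2 * t = n) :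
    Nat.card (linearStructures (rsFun n t)) = 1 := by
  have hS : ∀ j : ZMod n, j + t ∈ ({j : ZMod n | j.val < t} : Finset _) ↔
      j ∉ ({j : ZMod n | j.val < t} : Finset _) := fun j => by
    have := j.val_lt
    simp only [mem_filter_univ, ZMod.val_add, ZMod.val_natCast, Nat.add_mod_eq_ite,
      Nat.mod_eq_of_lt this, Nat.mod_eq_of_lt (show t < n by omega)]
    split_ifs <;> omega
  have ha : (t : ZMod n) + t = 0 := by rw [← Nat.cast_add, ← two_mul, h, ZMod.natCast_self]
  rw [← card_linearStructures_halfForm hS ha]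
  exact card_linearStructures_eq_of_forall_eq_comp (relabelZMod n) 0 fun x => by
    rw [add_zero, rsFun, if_pos h, shortMrs_eq_halfForm]

lemma card_linearStructures_rsFun_eq_one_iff :
    Nat.card (linearStructures (rsFun n t)) = 1 ↔ 2 * t = n := by
  refine ⟨fun h1 => ?_, card_linearStructures_rsFun_of_eq⟩
  by_contra h
  rw [card_linearStructures_rsFun_of_ne h, Nat.pow_eq_one] at h1
  exact h1.elim (by omega) AddSubgroup.index_ne_zero_of_finite

end Invariants

section AffEquiv

variable {n : ℕ} {f g : (Fin n → ZMod 2) → ZMod 2}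

lemma affEquiv_refl (f : (Fin n → ZMod 2) → ZMod 2) : AffEquiv n f f :=
  ⟨1, 0, isUnit_one, fun x => by simp⟩

lemma AffEquiv.exists_addEquiv (h : AffEquiv n f g) :
    ∃ (e : (Fin n → ZMod 2) ≃+ (Fin n → ZMod 2)) (b : Fin n → ZMod 2),
      ∀ x, f x = g (e x + b) := by
  obtain ⟨A, b, hA, hfg⟩ := h
  exact ⟨AddEquiv.ofBijective A.mulVecLin.toAddMonoidHom
    ⟨Matrix.mulVec_injective_iff_isUnit.mpr hA, Matrix.mulVec_surjective_iff_isUnit.mpr hA⟩,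
    b, hfg⟩

lemma AffEquiv.signSum_eq (h : AffEquiv n f g) : signSum f = signSum g := by
  obtain ⟨e, b, hfg⟩ := h.exists_addEquiv
  exact signSum_eq_of_forall_eq_comp (e.toEquiv.trans (Equiv.addRight b)) hfg

lemma AffEquiv.card_linearStructures_eq (h : AffEquiv n f g) :
    Nat.card (linearStructures f) = Nat.card (linearStructures g) := by
  obtain ⟨e, b, hfg⟩ := h.exists_addEquiv
  exact card_linearStructures_eq_of_forall_eq_comp e b hfg

lemma affEquiv_rsFun_of_eq_units_mul [NeZero n] {t s : ℕ} (ht : 2 * t ≠ n) (hs : 2 * s ≠ n)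
    (u : (ZMod n)ˣ) (hu : (t : ZMod n) = u * s) : AffEquiv n (rsFun n t) (rsFun n s) := by
  let E := (ZMod.finEquiv n).toEquiv
  let σ : Equiv.Perm (Fin n) := E.trans ((Units.mulLeft u).trans E.symm)
  refine ⟨σ.permMatrix (ZMod 2), 0, ?_, fun x => ?_⟩
  · rw [Matrix.isUnit_iff_isUnit_det, Matrix.det_permutation]
    exact (Equiv.Perm.sign σ).isUnit.map (Int.castRingHom (ZMod 2))
  · rw [add_zero, Matrix.permMatrix_mulVec, rsFun, rsFun, if_neg ht, if_neg hs,
      mrs_eq_cyclicForm, mrs_eq_cyclicForm, hu, cyclicForm_units_mul]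
    congr 1
    funext i
    simp [relabelZMod, σ, E]

end AffEquiv

lemma exists_units_mul_gcd {n : ℕ} [NeZero n] (t : ℕ) :
    ∃ u : (ZMod n)ˣ, (t : ZMod n) = u * (n.gcd t : ℕ) := by
  obtain ⟨d, hd, u, hu, htd⟩ := ZMod.eq_unit_mul_divisor (t : ZMod n)
  suffices n.gcd t = d from ⟨hu.unit, by rw [this, htd, hu.unit_spec]⟩
  have hmod : t ≡ (hu.unit : ZMod n).val * d [MOD n] := by
    rw [← ZMod.natCast_eq_natCast_iff, Nat.cast_mul, ZMod.natCast_zmod_val, hu.unit_spec, ← htd]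
  rw [Nat.gcd_comm, hmod.gcd_eq, Nat.Coprime.gcd_mul_left_cancel _ (ZMod.val_coe_unit_coprime _),
    Nat.gcd_eq_left hd]

lemma addOrderOf_eq_of_index_zmultiples_eq {G : Type*} [AddGroup G] [Finite G] {a b : G}
    (h : (AddSubgroup.zmultiples a).index = (AddSubgroup.zmultiples b).index) :
    addOrderOf a = addOrderOf b := by
  have ha := (AddSubgroup.zmultiples a).index_mul_card
  have hb := (AddSubgroup.zmultiples b).index_mul_card
  rw [Nat.card_zmultiples, h] at ha
  rw [Nat.card_zmultiples] at hb
  exact Nat.eq_of_mul_eq_mul_left (Nat.pos_of_ne_zero AddSubgroup.index_ne_zero_of_finite)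
    (ha.trans hb.symm)

lemma addOrderOf_eq_of_addOrderOf_add_self_eq {G : Type*} [AddMonoid G] {a b : G}
    (h : addOrderOf (a + a) = addOrderOf (b + b))
    (hodd : Odd (addOrderOf a) ↔ Odd (addOrderOf b)) : addOrderOf a = addOrderOf b := by
  rw [← two_nsmul, ← two_nsmul, addOrderOf_nsmul' _ two_ne_zero,
    addOrderOf_nsmul' _ two_ne_zero] at h
  rcases Nat.even_or_odd (addOrderOf a) with ha | ha
  · have hb : Even (addOrderOf b) := by
      rw [← Nat.not_odd_iff_even, ← hodd, Nat.not_odd_iff_even]; exact ha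
    rw [Nat.gcd_eq_right (even_iff_two_dvd.mp ha), Nat.gcd_eq_right (even_iff_two_dvd.mp hb)] at h
    obtain ⟨k, hk⟩ := ha
    obtain ⟨l, hl⟩ := hb
    omega
  · rwa [(Nat.coprime_two_right.mpr ha).gcd_eq_one,
      (Nat.coprime_two_right.mpr (hodd.mp ha)).gcd_eq_one, Nat.div_one, Nat.div_one] at h

lemma eq_of_two_mul_eq_of_gcd_eq {n t s : ℕ} (hs : 1 ≤ s) (hs' : 2 * s ≤ n) (ht : 2 * t = n)
    (hg : n.gcd t = n.gcd s) : t = s := by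
  have hts : t ∣ s := by
    rw [← Nat.gcd_eq_right (show t ∣ n from ⟨2, by omega⟩), hg]
    exact Nat.gcd_dvd_right n s
  have := Nat.le_of_dvd hs hts
  omega

lemma gcd_eq_of_affEquiv_rsFun {n t s : ℕ} [NeZero n] (h : AffEquiv n (rsFun n t) (rsFun n s)) :
    n.gcd t = n.gcd s := by
  have hL := h.card_linearStructures_eq
  by_cases h2t : 2 * t = n
  · have h2s : 2 * s = n := card_linearStructures_rsFun_eq_one_iff.mp
      (hL ▸ card_linearStructures_rsFun_of_eq h2t)
    rw [show t = s by omega]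
  have h2s : 2 * s ≠ n := fun h2s => h2t (card_linearStructures_rsFun_eq_one_iff.mp
    (hL.trans (card_linearStructures_rsFun_of_eq h2s)))
  have hS := h.signSum_eq
  rw [card_linearStructures_rsFun_of_ne h2t, card_linearStructures_rsFun_of_ne h2s] at hL
  rw [signSum_rsFun_of_ne h2t, signSum_rsFun_of_ne h2s] at hS
  have hord := addOrderOf_eq_of_addOrderOf_add_self_eq
    (addOrderOf_eq_of_index_zmultiples_eq (Nat.pow_right_injective le_rfl hL))
    (by rw [← signSum_cyclicForm_eq_zero_iff, ← signSum_cyclicForm_eq_zero_iff, hS])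
  rw [ZMod.addOrderOf_coe _ (NeZero.ne n), ZMod.addOrderOf_coe _ (NeZero.ne n)] at hord
  rw [← Nat.div_div_self (Nat.gcd_dvd_left n t) (NeZero.ne n), hord,
    Nat.div_div_self (Nat.gcd_dvd_left n s) (NeZero.ne n)]

lemma affEquiv_rsFun_of_gcd_eq {n t s : ℕ} [NeZero n] (ht : 1 ≤ t) (ht' : 2 * t ≤ n)
    (hs : 1 ≤ s) (hs' : 2 * s ≤ n) (hg : n.gcd t = n.gcd s) :
    AffEquiv n (rsFun n t) (rsFun n s) := by
  by_cases h2t : 2 * t = n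
  · rw [eq_of_two_mul_eq_of_gcd_eq hs hs' h2t hg]
    exact affEquiv_refl _
  by_cases h2s : 2 * s = n
  · rw [eq_of_two_mul_eq_of_gcd_eq ht ht' h2s hg.symm]
    exact affEquiv_refl _
  obtain ⟨u, hu⟩ := exists_units_mul_gcd (n := n) t
  obtain ⟨v, hv⟩ := exists_units_mul_gcd (n := n) s
  refine affEquiv_rsFun_of_eq_units_mul h2t h2s (u * v⁻¹) ?_
  rw [hu, hg, hv, Units.val_mul, mul_assoc, Units.inv_mul_cancel_left]

lemma card_range_eq_card_properDivisors {α : Type*} {n : ℕ} (hn : n ≠ 0) (κ : ℕ → α)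
    (hκ : ∀ t s, 1 ≤ t → t ≤ n / 2 → 1 ≤ s → s ≤ n / 2 → (κ t = κ s ↔ n.gcd t = n.gcd s)) :
    Nat.card {a // ∃ t, 1 ≤ t ∧ t ≤ n / 2 ∧ a = κ t} = n.properDivisors.card := by
  have hmem : ∀ d ∈ n.properDivisors, 1 ≤ d ∧ d ≤ n / 2 ∧ n.gcd d = d := by
    intro d hd
    obtain ⟨⟨k, hk⟩, hlt⟩ := Nat.mem_properDivisors.mp hd
    have hd0 : 0 < d := Nat.pos_of_mem_properDivisors hd
    have hk2 : 2 ≤ k := by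
      by_contra! hk2
      interval_cases k <;> simp_all
    refine ⟨hd0, (Nat.le_div_iff_mul_le two_pos).mpr (by rw [hk]; nlinarith),
      Nat.gcd_eq_right ⟨k, hk⟩⟩
  rw [← Nat.card_eq_finsetCard]
  symm
  refine Nat.card_eq_of_bijective (fun d => ⟨κ d, d, (hmem d d.2).1, (hmem d d.2).2.1, rfl⟩)
    ⟨fun d e hde => Subtype.ext ?_, ?_⟩
  · have := (hκ d e (hmem d d.2).1 (hmem d d.2).2.1 (hmem e e.2).1 (hmem e e.2).2.1).mp
      (congrArg Subtype.val hde)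
    rwa [(hmem d d.2).2.2, (hmem e e.2).2.2] at this
  · rintro ⟨_, t, ht, ht', rfl⟩
    have hg : n.gcd t ∈ n.properDivisors := Nat.mem_properDivisors.mpr
      ⟨Nat.gcd_dvd_left n t, (Nat.gcd_le_right n ht).trans_lt (by omega)⟩
    exact ⟨⟨n.gcd t, hg⟩, Subtype.ext <|
      (hκ _ _ (hmem _ hg).1 (hmem _ hg).2.1 ht ht').mpr (hmem _ hg).2.2⟩

lemma setOf_affEquiv_rsFun_eq_iff {n t s : ℕ} [NeZero n] (ht : 1 ≤ t) (ht' : t ≤ n / 2)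
    (hs : 1 ≤ s) (hs' : s ≤ n / 2) :
    {g | (∃ r, 1 ≤ r ∧ r ≤ n / 2 ∧ g = rsFun n r) ∧ AffEquiv n (rsFun n t) g} =
      {g | (∃ r, 1 ≤ r ∧ r ≤ n / 2 ∧ g = rsFun n r) ∧ AffEquiv n (rsFun n s) g} ↔
      n.gcd t = n.gcd s := by
  have key : ∀ {t r}, 1 ≤ t → t ≤ n / 2 → 1 ≤ r → r ≤ n / 2 →
      (AffEquiv n (rsFun n t) (rsFun n r) ↔ n.gcd t = n.gcd r) := fun ht ht' hr hr' =>
    ⟨gcd_eq_of_affEquiv_rsFun, affEquiv_rsFun_of_gcd_eq ht (by omega) hr (by omega)⟩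
  constructor
  · intro h
    have hmem : rsFun n s ∈ {g | (∃ r, 1 ≤ r ∧ r ≤ n / 2 ∧ g = rsFun n r) ∧
        AffEquiv n (rsFun n s) g} := ⟨⟨s, hs, hs', rfl⟩, (key hs hs' hs hs').mpr rfl⟩
    rw [← h] at hmem
    exact (key ht ht' hs hs').mp hmem.2
  · intro hg
    ext g
    refine and_congr_right fun ⟨r, hr, hr', hgr⟩ => ?_
    rw [hgr, key ht ht' hr hr', key hs hs' hr hr', hg]

/-- The quadratic MRS functions in `n ≥ 3` variables fall into exactly `τ(n) - 1`
affine equivalence classes. -/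
theorem mrs_affine_equivalence_classes (n : ℕ) (hn : 3 ≤ n) :
    Nat.card {C : Set ((Fin n → ZMod 2) → ZMod 2) //
      ∃ t, 1 ≤ t ∧ t ≤ n / 2 ∧
        C = {g | (∃ s, 1 ≤ s ∧ s ≤ n / 2 ∧ g = rsFun n s) ∧ AffEquiv n (rsFun n t) g}} =
    (Nat.divisors n).card - 1 := by
  have : NeZero n := ⟨by omega⟩
  rw [← Nat.cons_self_properDivisors (NeZero.ne n), card_cons, Nat.add_sub_cancel]
  exact card_range_eq_card_properDivisors (NeZero.ne n) _ fun t s ht ht' hs hs' =>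
    setOf_affEquiv_rsFun_eq_iff ht ht' hs hs'
end

section
/- Let S be a nonempty finite set of positive integers all of which are odd, and let n ≥ 1. Then the quadratic trace function Q_n(x) = Tr(∑_{i∈S} x^(2^i+1)) on GaloisField 2 n is balanced if and only if n is odd and |S| is odd. -/
/-- The quadratic trace function `Q_n(x) = Tr(∑_{i∈S} x^(2^i+1))` on `GaloisField 2 n`. -/
noncomputable def Qtr (S : Finset ℕ) (n : ℕ) (x : GaloisField 2 n) : ZMod 2 :=
  Algebra.trace (ZMod 2) (GaloisField 2 n) (∑ i ∈ S, x ^ (2 ^ i + 1))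

/-- `g` is balanced if it takes the value `1` exactly `2^(n-1)` times. -/
noncomputable def BalancedG (n : ℕ) (g : GaloisField 2 n → ZMod 2) : Prop :=
  Nat.card {x : GaloisField 2 n // g x = 1} = 2 ^ (n - 1)

/-!
Let `B(x, y) = Tr (∑_{i∈S} (x^(2^i) y + x y^(2^i)))` be the polar form of `Q = Qtr S n`, so that
`Q(x + y) = Q(x) + Q(y) + B(x, y)`.

* `n` and `|S|` odd: `B(x, 1) = 0` and `Q(1) = |S| n = 1`, so `x ↦ x + 1` swaps the two
  level sets.
* `n` even: `3 ∣ 2^n - 1` yields a cube root of unity `ω ≠ 1`, and `Q(ω x) = Q(x)` since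
  `3 ∣ 2^i + 1` for odd `i`. So `ω` permutes `Q⁻¹(1) ∌ 0` without fixed points, and
  `3 ∣ |Q⁻¹(1)|`, which rules out `2^(n-1)`.
* `n` odd, `|S|` even: `(∑ (-1)^Q(x))² = 2^n ∑_{z ∈ rad B} (-1)^Q(z)`, and `Q` vanishes on
  the radical: if `Tr z = 0`, write `z = m² + m`, so `Q(z) = B(m², m) = B(z, m) + B(m, m) = 0`;
  otherwise apply this to `z + 1`, using `Tr 1 = 1` and `Q(1) = 0`. So the sign sum is nonzero.
-/

open Finset

section Trace

variable {K : Type*} [Field K] [Finite K] [Algebra (ZMod 2) K]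

local notation "Tr" => Algebra.trace (ZMod 2) K

theorem trace_one_eq_finrank : Tr (1 : K) = Module.finrank (ZMod 2) K := by
  rw [← map_one (algebraMap (ZMod 2) K), Algebra.trace_algebraMap, nsmul_one]

theorem trace_sq (x : K) : Tr (x ^ 2) = Tr x := by
  simpa using Algebra.trace_eq_of_algEquiv (FiniteField.frobeniusAlgEquivOfAlgebraic (ZMod 2) K) x

theorem trace_pow_two_pow (x : K) (i : ℕ) : Tr (x ^ 2 ^ i) = Tr x := by
  induction i with
  | zero => simp
  | succ i ih => rw [pow_succ, pow_mul, trace_sq, ih]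

theorem exists_sq_add_self_eq_of_trace_eq_zero {z : K} (hz : Tr z = 0) :
    ∃ m : K, m ^ 2 + m = z := by
  have : CharP K 2 := charP_of_injective_algebraMap' (ZMod 2) 2
  let φ : K →ₗ[ZMod 2] K := (FiniteField.frobeniusAlgHom (ZMod 2) K).toLinearMap + LinearMap.id
  have hφ (m : K) : φ m = m ^ 2 + m := by simp [φ]
  have hrange : LinearMap.range φ ≤ LinearMap.ker Tr := by
    rintro _ ⟨m, rfl⟩
    rw [LinearMap.mem_ker, hφ, map_add, trace_sq, CharTwo.add_self_eq_zero]
  have hker : LinearMap.ker φ ≤ Submodule.span (ZMod 2) {1} := by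
    intro m hm
    rw [LinearMap.mem_ker, hφ] at hm
    rcases mul_eq_zero.mp (show m * (m + 1) = 0 by rw [← hm]; ring) with h | h
    · simp [h]
    · rw [add_eq_zero_iff_eq_neg, CharTwo.neg_eq] at h
      rw [h]
      exact Submodule.mem_span_singleton_self 1
  have hdim : Module.finrank (ZMod 2) (LinearMap.ker Tr) ≤
      Module.finrank (ZMod 2) (LinearMap.range φ) := by
    have h1 := LinearMap.finrank_range_add_finrank_ker φ
    have h2 := LinearMap.finrank_range_add_finrank_ker Tr
    have h3 := (Submodule.finrank_mono hker).trans (finrank_span_le_card ({1} : Set K))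
    rw [LinearMap.range_eq_top.mpr (Algebra.trace_surjective (ZMod 2) K), finrank_top,
      Module.finrank_self] at h2
    simp at h3
    omega
  have hz' : z ∈ LinearMap.range φ := by
    rw [Submodule.eq_of_le_of_finrank_le hrange hdim]
    exact hz
  obtain ⟨m, rfl⟩ := hz'
  exact ⟨m, (hφ m).symm⟩

end Trace

section SignSum

def signChar : AddChar (ZMod 2) ℤ := AddChar.zmodChar 2 (ζ := -1) (by norm_num)

theorem signChar_eq (t : ZMod 2) : signChar t = 1 - 2 * if t = 1 then 1 else 0 := by
  fin_cases t <;> rfl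

theorem signChar_add_one (t : ZMod 2) : signChar (t + 1) = -signChar t := by
  fin_cases t <;> rfl

variable {V : Type*} [Fintype V]

theorem sum_signChar_eq_card_sub (f : V → ZMod 2) :
    ∑ x, signChar (f x) = Fintype.card V - 2 * Nat.card {x // f x = 1} := by
  simp [signChar_eq, Finset.sum_sub_distrib, Finset.sum_ite, Fintype.card_subtype, mul_comm]

variable [AddCommGroup V]

theorem sum_signChar_eq_zero_of_add_eq_add_one {f : V → ZMod 2} {a : V}
    (hf : ∀ x, f (x + a) = f x + 1) : ∑ x, signChar (f x) = 0 := by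
  have h := Fintype.sum_equiv (Equiv.addRight a) (fun x => signChar (f (x + a)))
    (fun x => signChar (f x)) (fun _ => rfl)
  simp only [hf, signChar_add_one, Finset.sum_neg_distrib] at h
  linarith

theorem two_mul_card_eq_card_of_add_eq_add_one {f : V → ZMod 2} {a : V}
    (hf : ∀ x, f (x + a) = f x + 1) : 2 * Nat.card {x // f x = 1} = Nat.card V := by
  have h := sum_signChar_eq_zero_of_add_eq_add_one hf
  rw [sum_signChar_eq_card_sub, Nat.card_eq_fintype_card (α := V)] at *
  omega

theorem sum_signChar_of_map_add {g : V → ZMod 2} (hg : ∀ x y, g (x + y) = g x + g y) :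
    ∑ x, signChar (g x) = if ∀ x, g x = 0 then (Fintype.card V : ℤ) else 0 := by
  split_ifs with h
  · simp [h]
  · push Not at h
    obtain ⟨a, ha⟩ := h
    refine sum_signChar_eq_zero_of_add_eq_add_one (a := a) fun x => ?_
    rw [hg, (by decide : ∀ t : ZMod 2, t ≠ 0 → t = 1) _ ha]

theorem sq_sum_signChar (Q : V → ZMod 2) (B : V → V → ZMod 2)
    (hB : ∀ x y y', B x (y + y') = B x y + B x y')
    (hQ : ∀ x y, Q (x + y) = Q x + Q y + B x y) :
    (∑ x, signChar (Q x)) ^ 2 =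
      Fintype.card V * ∑ z with ∀ y, B z y = 0, signChar (Q z) := by
  have hshift (y z : V) :
      signChar (Q (z + y)) * signChar (Q y) = signChar (Q z) * signChar (B z y) := by
    rw [← AddChar.map_add_eq_mul, ← AddChar.map_add_eq_mul, hQ]
    congr 1
    grind
  calc (∑ x, signChar (Q x)) ^ 2
      = ∑ y, ∑ z, signChar (Q (z + y)) * signChar (Q y) := by
        rw [sq, Finset.sum_mul_sum, Finset.sum_comm]
        exact Finset.sum_congr rfl fun y _ =>
          (Fintype.sum_equiv (Equiv.addRight y) _ _ fun _ => rfl).symm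
    _ = ∑ z, signChar (Q z) * ∑ y, signChar (B z y) := by
        simp only [hshift, Finset.mul_sum]
        exact Finset.sum_comm
    _ = _ := by
        simp only [sum_signChar_of_map_add (hB _), Finset.mul_sum, Finset.sum_filter]
        refine Finset.sum_congr rfl fun z _ => ?_
        split_ifs <;> ring

theorem two_mul_card_ne_card_of_eq_zero_on_radical (Q : V → ZMod 2) (B : V → V → ZMod 2)
    (hB : ∀ x y y', B x (y + y') = B x y + B x y')
    (hQ : ∀ x y, Q (x + y) = Q x + Q y + B x y)
    (hrad : ∀ z, (∀ y, B z y = 0) → Q z = 0) :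
    2 * Nat.card {x // Q x = 1} ≠ Nat.card V := by
  intro h
  have hsum : ∑ x, signChar (Q x) = 0 := by
    rw [sum_signChar_eq_card_sub, ← Nat.card_eq_fintype_card, ← h]
    push_cast
    ring
  have hsq := sq_sum_signChar Q B hB hQ
  rw [hsum, Finset.sum_congr rfl fun z hz => by
    rw [hrad z (Finset.mem_filter.mp hz).2, AddChar.map_zero_eq_one]] at hsq
  have h0 : (0 : V) ∈ ({z | ∀ y, B z y = 0} : Finset V) := by
    simp only [Finset.mem_filter, Finset.mem_univ, true_and]
    intro y
    have := hQ 0 y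
    have := hQ 0 0
    have := hB 0 0 0
    grind
  rw [Finset.sum_const, nsmul_one, zero_pow two_ne_zero] at hsq
  have hpos : 0 < Fintype.card V * #{z | ∀ y, B z y = 0} :=
    Nat.mul_pos Fintype.card_pos (Finset.card_pos.mpr ⟨0, h0⟩)
  exact_mod_cast hpos.ne' (by exact_mod_cast hsq.symm)

end SignSum

section RootsOfUnity

theorem exists_pow_eq_one_ne_one {K : Type*} [Field K] [Fintype K] (p : ℕ) [Fact p.Prime]
    (hp : p ∣ Fintype.card K - 1) : ∃ u : Kˣ, u ^ p = 1 ∧ u ≠ 1 := by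
  classical
  rw [← Fintype.card_units] at hp
  obtain ⟨u, hu⟩ := exists_prime_orderOf_dvd_card p hp
  refine ⟨u, hu ▸ pow_orderOf_eq_one u, fun h => ?_⟩
  rw [h, orderOf_one] at hu
  exact (Fact.out : p.Prime).one_lt.ne hu

theorem prime_dvd_card_of_mul_invariant {R : Type*} [Ring R] [NoZeroDivisors R] [Finite R]
    {p : ℕ} [Fact p.Prime] {u : Rˣ} (hu : u ^ p = 1) (hu1 : u ≠ 1) {P : R → Prop}
    (h0 : ¬ P 0) (hP : ∀ x, P (u * x) ↔ P x) : p ∣ Nat.card {x // P x} := by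
  have := Fintype.ofFinite {x // P x}
  by_contra hdvd
  rw [Nat.card_eq_fintype_card] at hdvd
  have hσ : (MulAction.toPerm u : Equiv.Perm R).subtypePerm hP ^ p ^ 1 = 1 := by
    refine (Equiv.Perm.subtypePerm_pow _ _ _).trans ?_
    have : (MulAction.toPerm u : Equiv.Perm R) ^ p = 1 := by
      rw [← MulAction.toPermHom_apply, ← map_pow, hu, map_one]
    ext
    simp [this]
  obtain ⟨⟨x, hx⟩, hfix⟩ := Equiv.Perm.exists_fixed_point_of_prime hdvd hσ
  have hux : ((u : R) - 1) * x = 0 := by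
    rw [sub_mul, one_mul, sub_eq_zero]
    exact congrArg Subtype.val hfix
  rcases mul_eq_zero.mp hux with h | h
  · exact hu1 (Units.val_eq_one.mp (sub_eq_zero.mp h))
  · exact h0 (h ▸ hx)

theorem three_dvd_two_pow_add_one {i : ℕ} (hi : Odd i) : 3 ∣ 2 ^ i + 1 := by
  simpa using Odd.nat_add_dvd_pow_add_pow 2 1 hi

theorem three_dvd_two_pow_sub_one {n : ℕ} (hn : Even n) : 3 ∣ 2 ^ n - 1 := by
  obtain ⟨k, rfl⟩ := hn
  simpa [← two_mul, pow_mul] using Nat.sub_dvd_pow_sub_pow 4 1 k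

end RootsOfUnity

section QuadraticTrace

variable (S : Finset ℕ) {n : ℕ}

local notation "F" => GaloisField 2 n
local notation "Tr" => Algebra.trace (ZMod 2) (GaloisField 2 n)

noncomputable def QtrPolar (x y : F) : ZMod 2 := Tr (∑ i ∈ S, (x ^ 2 ^ i * y + x * y ^ 2 ^ i))

theorem QtrPolar_comm (x y : F) : QtrPolar S x y = QtrPolar S y x := by
  simp only [QtrPolar]
  congr 1
  exact Finset.sum_congr rfl fun i _ => by ring

theorem QtrPolar_add_right (x y y' : F) :
    QtrPolar S x (y + y') = QtrPolar S x y + QtrPolar S x y' := by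
  simp only [QtrPolar, ← map_add, ← Finset.sum_add_distrib, add_pow_char_pow]
  congr 1
  exact Finset.sum_congr rfl fun i _ => by ring

theorem QtrPolar_add_left (x x' y : F) :
    QtrPolar S (x + x') y = QtrPolar S x y + QtrPolar S x' y := by
  rw [QtrPolar_comm, QtrPolar_add_right, QtrPolar_comm, QtrPolar_comm S y]

theorem QtrPolar_self (x : F) : QtrPolar S x x = 0 := by
  simp [QtrPolar, mul_comm, CharTwo.add_self_eq_zero]

theorem QtrPolar_one_right (x : F) : QtrPolar S x 1 = 0 := by
  simp [QtrPolar, map_sum, trace_pow_two_pow, CharTwo.add_self_eq_zero]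

theorem Qtr_add (x y : F) : Qtr S n (x + y) = Qtr S n x + Qtr S n y + QtrPolar S x y := by
  simp only [Qtr, QtrPolar, ← map_add, ← Finset.sum_add_distrib]
  congr 1
  refine Finset.sum_congr rfl fun i _ => ?_
  rw [pow_succ, pow_succ, pow_succ, add_pow_char_pow]
  ring

theorem Qtr_sq (x : F) : Qtr S n (x ^ 2) = Qtr S n x := by
  rw [Qtr, Qtr, ← trace_sq (∑ i ∈ S, x ^ (2 ^ i + 1)), sum_pow_char]
  simp only [← pow_mul, mul_comm]

theorem Qtr_one (hn : n ≠ 0) : Qtr S n 1 = #S * n := by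
  rw [Qtr]
  simp only [one_pow, Finset.sum_const]
  rw [map_nsmul, nsmul_eq_mul, trace_one_eq_finrank, GaloisField.finrank 2 hn]

theorem Qtr_add_one (x : F) : Qtr S n (x + 1) = Qtr S n x + Qtr S n 1 := by
  rw [Qtr_add, QtrPolar_one_right, add_zero]

theorem Qtr_mul_of_pow_eq_one (hS : ∀ i ∈ S, Odd i) {ω : F} (hω : ω ^ 3 = 1) (x : F) :
    Qtr S n (ω * x) = Qtr S n x := by
  simp only [Qtr]
  congr 1
  refine Finset.sum_congr rfl fun i hi => ?_
  obtain ⟨k, hk⟩ := three_dvd_two_pow_add_one (hS i hi)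
  rw [mul_pow, hk, pow_mul, hω, one_pow, one_mul]

theorem Qtr_eq_zero_of_trace_eq_zero {z : F} (hz : ∀ y, QtrPolar S z y = 0) (htr : Tr z = 0) :
    Qtr S n z = 0 := by
  obtain ⟨m, rfl⟩ := exists_sq_add_self_eq_of_trace_eq_zero htr
  have hm : m ^ 2 = (m ^ 2 + m) + m := by rw [add_assoc, CharTwo.add_self_eq_zero, add_zero]
  rw [Qtr_add, Qtr_sq, CharTwo.add_self_eq_zero, zero_add, QtrPolar_comm, hm,
    QtrPolar_add_right, QtrPolar_comm, hz, QtrPolar_self, add_zero]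

theorem Qtr_eq_zero_of_polar_eq_zero (hn : Odd n) (hS : Even #S) {z : F}
    (hz : ∀ y, QtrPolar S z y = 0) : Qtr S n z = 0 := by
  by_cases htr : Tr z = 0
  · exact Qtr_eq_zero_of_trace_eq_zero S hz htr
  have htr1 : Tr (1 : F) = 1 := by
    rw [trace_one_eq_finrank, GaloisField.finrank 2 hn.pos.ne', hn.natCast_zmod_two]
  have hz1 : ∀ y, QtrPolar S (z + 1) y = 0 := fun y => by
    rw [QtrPolar_add_left, hz, QtrPolar_comm, QtrPolar_one_right, add_zero]
  have htrz1 : Tr (z + 1) = 0 := by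
    rw [map_add, htr1, (by decide : ∀ t : ZMod 2, t ≠ 0 → t = 1) _ htr]
    rfl
  have h := Qtr_eq_zero_of_trace_eq_zero S hz1 htrz1
  rwa [Qtr_add_one, Qtr_one S hn.pos.ne', hS.natCast_zmod_two, zero_mul, add_zero] at h

end QuadraticTrace

section Balance

variable (S : Finset ℕ) {n : ℕ}

theorem balancedG_iff (hn : n ≠ 0) (g : GaloisField 2 n → ZMod 2) :
    BalancedG n g ↔ 2 * Nat.card {x // g x = 1} = Nat.card (GaloisField 2 n) := by
  obtain ⟨m, rfl⟩ := Nat.exists_eq_succ_of_ne_zero hn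
  rw [BalancedG, GaloisField.card 2 _ hn, pow_succ, Nat.succ_sub_one]
  omega

theorem balancedG_Qtr_of_odd (hn : Odd n) (hS : Odd #S) : BalancedG n (Qtr S n) := by
  have := Fintype.ofFinite (GaloisField 2 n)
  rw [balancedG_iff hn.pos.ne']
  refine two_mul_card_eq_card_of_add_eq_add_one (a := 1) fun x => ?_
  rw [Qtr_add_one, Qtr_one S hn.pos.ne', hS.natCast_zmod_two, hn.natCast_zmod_two, mul_one]

theorem not_balancedG_Qtr_of_even_card (hn : Odd n) (hS : Even #S) :
    ¬ BalancedG n (Qtr S n) := by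
  have := Fintype.ofFinite (GaloisField 2 n)
  rw [balancedG_iff hn.pos.ne']
  exact two_mul_card_ne_card_of_eq_zero_on_radical _ _ (QtrPolar_add_right S) (Qtr_add S)
    fun _ hz => Qtr_eq_zero_of_polar_eq_zero S hn hS hz

theorem not_balancedG_Qtr_of_even (hOdd : ∀ i ∈ S, Odd i) (hn : Even n) (hn0 : n ≠ 0) :
    ¬ BalancedG n (Qtr S n) := by
  have := Fintype.ofFinite (GaloisField 2 n)
  have hcard : Fintype.card (GaloisField 2 n) = 2 ^ n := by
    rw [← Nat.card_eq_fintype_card, GaloisField.card 2 n hn0]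
  obtain ⟨u, hu, hu1⟩ := exists_pow_eq_one_ne_one (K := GaloisField 2 n) 3
    (hcard ▸ three_dvd_two_pow_sub_one hn)
  have h3 : 3 ∣ Nat.card {x // Qtr S n x = 1} := by
    refine prime_dvd_card_of_mul_invariant hu hu1 (by simp [Qtr]) fun x => ?_
    rw [Qtr_mul_of_pow_eq_one S hOdd (by rw [← Units.val_pow_eq_pow_val, hu, Units.val_one])]
  rw [balancedG_iff hn0, Nat.card_eq_fintype_card (α := GaloisField 2 n), hcard]
  intro h
  have := (Nat.prime_three.dvd_of_dvd_pow (h ▸ dvd_mul_of_dvd_right h3 2))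
  norm_num at this

end Balance

theorem all_odd_exponents_balanced_iff_general (S : Finset ℕ)
    (hOdd : ∀ i ∈ S, Odd i) (n : ℕ) (hn : 1 ≤ n) :
    BalancedG n (Qtr S n) ↔ Odd n ∧ Odd S.card := by
  refine ⟨fun h => ?_, fun ⟨hn_odd, hS_odd⟩ => balancedG_Qtr_of_odd S hn_odd hS_odd⟩
  have hn_odd : Odd n := Nat.not_even_iff_odd.mp fun hn_even =>
    not_balancedG_Qtr_of_even S hOdd hn_even (by omega) h
  exact ⟨hn_odd, Nat.not_even_iff_odd.mp fun hS_even =>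
    not_balancedG_Qtr_of_even_card S hn_odd hS_even h⟩

/-- If all exponents in `S` are odd, then `Q_n` is balanced iff both `n` and the
number of terms are odd. -/
theorem all_odd_exponents_balanced_iff (S : Finset ℕ) (hS : S.Nonempty)
    (hpos : ∀ i ∈ S, 1 ≤ i) (hOdd : ∀ i ∈ S, Odd i) (n : ℕ) (hn : 1 ≤ n) :
    BalancedG n (Qtr S n) ↔ Odd n ∧ Odd S.card :=
  all_odd_exponents_balanced_iff_general S hOdd n hn
end
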